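/- Let k be a positive integer and τ, μ positive real numbers with kμ < τ, set λ = τ − kμ and κ = (μ/3)·(3λ + kμ)/(2λ + kμ). Then 2τκ + (2μκ − μ²) + 2λ(κ − μ) + μ(2κ − μ) = (2kμ²/3)·(1 − μ/(2λ + kμ)); in particular this quantity is strictly positive. -/
import Mathlib


/-- With `λ = τ - kμ` and `κ = (μ/3)(3λ + kμ)/(2λ + kμ)`, the sum of the four
boundary contributions `2τκ + (2μκ - μ²) + 2λ(κ - μ) + μ(2κ - μ)` equals
`(2kμ²/3)(1 - μ/(2λ + kμ))`, and this quantity is strictly positive. -/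
theorem hirzebruch_I_psi (k : ℕ) (hk : 0 < k) (τ μ : ℝ) (hτ : 0 < τ) (hμ : 0 < μ)
    (hkμ : (k : ℝ) * μ < τ) :
    let lam : ℝ := τ - k * μ
    let κ : ℝ := (μ / 3) * (3 * lam + k * μ) / (2 * lam + k * μ)
    2 * τ * κ + (2 * μ * κ - μ ^ 2) + 2 * lam * (κ - μ) + μ * (2 * κ - μ) =
      (2 * k * μ ^ 2 / 3) * (1 - μ / (2 * lam + k * μ)) ∧
    0 < (2 * k * μ ^ 2 / 3) * (1 - μ / (2 * lam + k * μ)) := by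
  intro lam κ
  have hk1 : (1 : ℝ) ≤ k := by exact_mod_cast hk
  have hlam : 0 < lam := by simp only [lam]; linarith
  have hkμμ : μ ≤ (k : ℝ) * μ := le_mul_of_one_le_left hμ.le hk1
  have hd : 0 < 2 * lam + k * μ := by positivity
  have hμd : μ < 2 * lam + k * μ := by linarith
  constructor
  · simp only [κ]
    field_simp
    ring
  · have h1 : 0 < 1 - μ / (2 * lam + k * μ) := by
      rw [sub_pos, div_lt_one hd]; exact hμd
    have hkpos : (0:ℝ) < k := by exact_mod_cast hk
    positivity
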